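/- (Sym-Tafel formula, smooth case) Let κ(x,t) be a smooth solution of the mKdV equation ∂ₜκ = (3/2)κ²∂ₓκ + ∂ₓ³κ with κ > 0 everywhere, and let φ(x,t,λ) be an SU(2)-valued function, smooth in all variables, satisfying for every λ ∈ ℝ: ∂ₓφ = φ·L with L = (1/2)[[iλ, −κ],[κ, −iλ]], and ∂ₜφ = φ·M with M = (1/2)[[iλ(κ²/2 − λ²), −κ³/2 + λ²κ − ∂ₓ²κ + iλ∂ₓκ],[κ³/2 − λ²κ + ∂ₓ²κ + iλ∂ₓκ, −iλ(κ²/2 − λ²)]]. Fix λ ∈ ℝ and set S = (∂_λφ)·φ⁻¹ and γ = f⁻¹(S). Then S takes values in su(2), and for each t the curve x ↦ γ(x,t) satisfies |∂ₓγ| = 1 (arc-length parameterized), its curvature |∂ₓ²γ| equals κ, and its torsion −⟨∂ₓ²γ/|∂ₓ²γ|, ∂ₓ(∂ₓγ × ∂ₓ²γ/|∂ₓ²γ|)⟩ equals λ. -/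

import Mathlib

open Matrix

noncomputable section

/-- Euclidean inner product on ℝ³ (written as `Fin 3 → ℝ`). -/
def dot3 (x y : Fin 3 → ℝ) : ℝ := x 0 * y 0 + x 1 * y 1 + x 2 * y 2

/-- Cross product on ℝ³. -/
def cross3 (x y : Fin 3 → ℝ) : Fin 3 → ℝ :=
  ![x 1 * y 2 - x 2 * y 1, x 2 * y 0 - x 0 * y 2, x 0 * y 1 - x 1 * y 0]

/-- Euclidean norm on ℝ³. -/
def norm3 (x : Fin 3 → ℝ) : ℝ := Real.sqrt (dot3 x x)

/-- The tangent vector T = ∂ₓγ. -/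
def Dx (γ : ℝ → ℝ → Fin 3 → ℝ) (x t : ℝ) : Fin 3 → ℝ := deriv (fun x' => γ x' t) x

/-- The second x-derivative ∂ₓ²γ. -/
def Dxx (γ : ℝ → ℝ → Fin 3 → ℝ) (x t : ℝ) : Fin 3 → ℝ := deriv (fun x' => Dx γ x' t) x

/-- The curvature κ = |∂ₓ²γ|. -/
def curv (γ : ℝ → ℝ → Fin 3 → ℝ) (x t : ℝ) : ℝ := norm3 (Dxx γ x t)

/-- The principal normal vector N = ∂ₓ²γ / κ. -/
def Nv (γ : ℝ → ℝ → Fin 3 → ℝ) (x t : ℝ) : Fin 3 → ℝ := (curv γ x t)⁻¹ • Dxx γ x t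

/-- The binormal vector B = T × N. -/
def Bv (γ : ℝ → ℝ → Fin 3 → ℝ) (x t : ℝ) : Fin 3 → ℝ := cross3 (Dx γ x t) (Nv γ x t)

/-- The torsion λ = −⟨N, ∂ₓB⟩. -/
def tors (γ : ℝ → ℝ → Fin 3 → ℝ) (x t : ℝ) : ℝ :=
  - dot3 (Nv γ x t) (deriv (fun x' => Bv γ x' t) x)

/-- e₁ = (i/2)[[1,0],[0,−1]]. -/
def e1 : Matrix (Fin 2) (Fin 2) ℂ := (Complex.I / 2) • !![1, 0; 0, -1]

/-- e₂ = (i/2)[[0,1],[1,0]]. -/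
def e2 : Matrix (Fin 2) (Fin 2) ℂ := (Complex.I / 2) • !![0, 1; 1, 0]

/-- e₃ = (1/2)[[0,−1],[1,0]]. -/
def e3 : Matrix (Fin 2) (Fin 2) ℂ := (1 / 2 : ℂ) • !![0, -1; 1, 0]

/-- The linear map f : ℝ³ → M₂(ℂ), f(x) = x₁e₁ + x₂e₂ + x₃e₃. -/
def fmap (x : Fin 3 → ℝ) : Matrix (Fin 2) (Fin 2) ℂ :=
  (x 0 : ℂ) • e1 + (x 1 : ℂ) • e2 + (x 2 : ℂ) • e3

/-- The matrix L = (1/2)[[iλ, −κ],[κ, −iλ]]. -/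
def Lmat (k l : ℝ) : Matrix (Fin 2) (Fin 2) ℂ :=
  (1 / 2 : ℂ) • !![Complex.I * (l : ℂ), -(k : ℂ); (k : ℂ), -(Complex.I * (l : ℂ))]

/-- The matrix M of the mKdV AKNS pair, where kx = ∂ₓκ and kxx = ∂ₓ²κ. -/
def Mmat (k kx kxx l : ℝ) : Matrix (Fin 2) (Fin 2) ℂ :=
  (1 / 2 : ℂ) •
    !![Complex.I * (l : ℂ) * ((k ^ 2 / 2 - l ^ 2 : ℝ) : ℂ),
         ((-(k ^ 3 / 2) + l ^ 2 * k - kxx : ℝ) : ℂ) + Complex.I * (l : ℂ) * (kx : ℂ);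
       ((k ^ 3 / 2 - l ^ 2 * k + kxx : ℝ) : ℂ) + Complex.I * (l : ℂ) * (kx : ℂ),
         -(Complex.I * (l : ℂ) * ((k ^ 2 / 2 - l ^ 2 : ℝ) : ℂ))]

def E1m : Matrix (Fin 2) (Fin 2) ℂ := !![Complex.I/2, 0; 0, -(Complex.I/2)]

-- AUX LEMMAS (to be inserted before the theorem)

/-- Mixed partial derivatives commute for smooth functions. -/
lemma clairaut {g : ℝ × ℝ → ℂ} (hg : ContDiff ℝ (⊤ : ℕ∞) g)
    {gx gl : ℝ × ℝ → ℂ}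
    (hgx : ∀ p : ℝ × ℝ, HasDerivAt (fun y => g (y, p.2)) (gx p) p.1)
    (hgl : ∀ p : ℝ × ℝ, HasDerivAt (fun u => g (p.1, u)) (gl p) p.2)
    {p : ℝ × ℝ} {d : ℂ}
    (hd : HasDerivAt (fun u => gx (p.1, u)) d p.2) :
    HasDerivAt (fun y => gl (y, p.2)) d p.1 := by
  have hdiff : Differentiable ℝ g := hg.differentiable (by simp)
  have hF : ∀ q : ℝ × ℝ, HasFDerivAt g (fderiv ℝ g q) q := fun q => (hdiff q).hasFDerivAt
  have hgx' : ∀ q : ℝ × ℝ, gx q = fderiv ℝ g q (1, 0) := by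
    intro q
    have h1 : HasDerivAt (fun y : ℝ => g (y, q.2)) (fderiv ℝ g q ((1:ℝ), (0:ℝ))) q.1 := by
      have := (hF q).comp_hasDerivAt q.1 (by simpa using ((hasDerivAt_id q.1).prodMk (hasDerivAt_const q.1 q.2)))
      exact this
    exact (hgx q).unique h1
  have hgl' : ∀ q : ℝ × ℝ, gl q = fderiv ℝ g q (0, 1) := by
    intro q
    have h1 : HasDerivAt (fun u : ℝ => g (q.1, u)) (fderiv ℝ g q ((0:ℝ), (1:ℝ))) q.2 := by
      have := (hF q).comp_hasDerivAt q.2 (by simpa using ((hasDerivAt_const q.2 q.1).prodMk (hasDerivAt_id q.2)))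
      exact this
    exact (hgl q).unique h1
  have hF2 : ContDiff ℝ 1 (fderiv ℝ g) := hg.fderiv_right (by exact WithTop.coe_le_coe.mpr le_top)
  have hFd : ∀ q : ℝ × ℝ, HasFDerivAt (fderiv ℝ g) (fderiv ℝ (fderiv ℝ g) q) q :=
    fun q => ((hF2.differentiable (by simp)) q).hasFDerivAt
  have hsymm := second_derivative_symmetric hF (hFd p) ((1:ℝ),(0:ℝ)) ((0:ℝ),(1:ℝ))
  have h2 : HasDerivAt (fun u : ℝ => gx (p.1, u)) ((fderiv ℝ (fderiv ℝ g) p (0,1)) (1,0)) p.2 := by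
    have hcomp : HasDerivAt (fun u : ℝ => fderiv ℝ g (p.1, u)) (fderiv ℝ (fderiv ℝ g) p ((0:ℝ),(1:ℝ))) p.2 := by
      have := (hFd p).comp_hasDerivAt p.2 (by simpa using ((hasDerivAt_const p.2 p.1).prodMk (hasDerivAt_id p.2)))
      exact this
    have happ := ((ContinuousLinearMap.apply ℝ ℂ ((1:ℝ),(0:ℝ))).hasFDerivAt).comp_hasDerivAt p.2 hcomp
    simp only [Function.comp_def] at happ
    exact happ.congr_of_eventuallyEq (by filter_upwards with u; rw [hgx' (p.1, u)]; rfl)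
  have hd' : d = (fderiv ℝ (fderiv ℝ g) p (0,1)) (1,0) := hd.unique h2
  have h3 : HasDerivAt (fun y : ℝ => gl (y, p.2)) ((fderiv ℝ (fderiv ℝ g) p (1,0)) (0,1)) p.1 := by
    have hcomp : HasDerivAt (fun y : ℝ => fderiv ℝ g (y, p.2)) (fderiv ℝ (fderiv ℝ g) p ((1:ℝ),(0:ℝ))) p.1 := by
      have := (hFd p).comp_hasDerivAt p.1 (by simpa using ((hasDerivAt_id p.1).prodMk (hasDerivAt_const p.1 p.2)))
      exact this
    have happ := ((ContinuousLinearMap.apply ℝ ℂ ((0:ℝ),(1:ℝ))).hasFDerivAt).comp_hasDerivAt p.1 hcomp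
    simp only [Function.comp_def] at happ
    exact happ.congr_of_eventuallyEq (by filter_upwards with y; rw [hgl' (y, p.2)]; rfl)
  rw [hd', ← hsymm]
  exact h3

/-- Entrywise product rule for 2×2 matrix-valued functions. -/
lemma entry_mul {f g : ℝ → Matrix (Fin 2) (Fin 2) ℂ} {f' g' : Matrix (Fin 2) (Fin 2) ℂ} {x : ℝ}
    (hf : ∀ i j, HasDerivAt (fun y => f y i j) (f' i j) x)
    (hg : ∀ i j, HasDerivAt (fun y => g y i j) (g' i j) x) :
    ∀ i j, HasDerivAt (fun y => (f y * g y) i j) ((f' * g x + f x * g') i j) x := by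
  intro i j
  have H := ((hf i 0).mul (hg 0 j)).add ((hf i 1).mul (hg 1 j))
  have heq : (fun y => (f y * g y) i j) =
      (fun y => f y i 0 * g y 0 j + f y i 1 * g y 1 j) := by
    funext y; simp [Matrix.mul_apply, Fin.sum_univ_two]
  rw [heq]
  convert H using 1
  · rfl
  · rfl
  simp [Matrix.mul_apply, Fin.sum_univ_two, Matrix.add_apply]
  ring

lemma HasDerivAt.cim {f : ℝ → ℂ} {f' : ℂ} {x : ℝ} (h : HasDerivAt f f' x) :
    HasDerivAt (fun y => (f y).im) f'.im x := by
  have := Complex.imCLM.hasFDerivAt.comp_hasDerivAt x h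
  exact this

lemma HasDerivAt.cre {f : ℝ → ℂ} {f' : ℂ} {x : ℝ} (h : HasDerivAt f f' x) :
    HasDerivAt (fun y => (f y).re) f'.re x := by
  have := Complex.reCLM.hasFDerivAt.comp_hasDerivAt x h
  exact this

/-- the inverse of the map f, reading off coordinates from an su(2) matrix. -/
def fv (X : Matrix (Fin 2) (Fin 2) ℂ) : Fin 3 → ℝ := ![2 * (X 0 0).im, 2 * (X 1 0).im, 2 * (X 1 0).re]

/-- generic SU(2) matrix. -/
def U (a c : ℂ) : Matrix (Fin 2) (Fin 2) ℂ := !![a, -(starRingEnd ℂ) c; c, (starRingEnd ℂ) a]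

lemma su2_sq (a c : ℂ) (h : a * (starRingEnd ℂ) a + c * (starRingEnd ℂ) c = 1) :
    a.re^2 + a.im^2 + c.re^2 + c.im^2 = 1 := by
  have := congrArg Complex.re h
  simp [Complex.mul_re] at this
  nlinarith [this]

lemma su2_TT (a c : ℂ) (h : a * (starRingEnd ℂ) a + c * (starRingEnd ℂ) c = 1) :
    dot3 (fv (U a c * e1 * (U a c)ᴴ)) (fv (U a c * e1 * (U a c)ᴴ)) = 1 := by
  have h' := su2_sq a c h
  obtain ⟨p, q⟩ := a
  obtain ⟨r, s⟩ := c
  simp at h'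
  simp [dot3, fv, U, e1, Matrix.mul_apply, Fin.sum_univ_two, Complex.ext_iff,
    Complex.mul_re, Complex.mul_im, Matrix.conjTranspose_apply]
  ring_nf
  nlinarith [h', sq_nonneg (p^2+q^2+r^2+s^2)]

lemma su2_NN (a c : ℂ) (h : a * (starRingEnd ℂ) a + c * (starRingEnd ℂ) c = 1) :
    dot3 (fv (U a c * e2 * (U a c)ᴴ)) (fv (U a c * e2 * (U a c)ᴴ)) = 1 := by
  have h' := su2_sq a c h
  obtain ⟨p, q⟩ := a
  obtain ⟨r, s⟩ := c
  simp at h'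
  simp [dot3, fv, U, e2, Matrix.mul_apply, Fin.sum_univ_two, Complex.ext_iff,
    Complex.mul_re, Complex.mul_im, Matrix.conjTranspose_apply]
  ring_nf
  nlinarith [h', sq_nonneg (p^2+q^2+r^2+s^2)]

lemma su2_cross (a c : ℂ) (h : a * (starRingEnd ℂ) a + c * (starRingEnd ℂ) c = 1) :
    cross3 (fv (U a c * e1 * (U a c)ᴴ)) (fv (U a c * e2 * (U a c)ᴴ)) = fv (U a c * e3 * (U a c)ᴴ) := by
  have h' := su2_sq a c h
  obtain ⟨p, q⟩ := a
  obtain ⟨r, s⟩ := c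
  simp at h'
  funext i
  fin_cases i <;>
    simp [dot3, cross3, fv, U, e1, e2, e3, Matrix.mul_apply, Fin.sum_univ_two, Complex.ext_iff,
      Complex.mul_re, Complex.mul_im, Matrix.conjTranspose_apply]
  · linear_combination (2*q*r + 2*p*s) * h'
  · linear_combination (2*r*s - 2*p*q) * h'
  · linear_combination (p^2 - q^2 + r^2 - s^2) * h'


set_option maxHeartbeats 1600000 in
/-- (Sym–Tafel formula, smooth case.)  If κ solves the mKdV equation and φ ∈ SU(2)
solves the AKNS linear problem, then S = (∂_λφ)φ⁻¹ is su(2)-valued and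
γ = f⁻¹(S) is an arc-length parameterized curve of curvature κ and torsion λ. -/
theorem statement7 (κ : ℝ → ℝ → ℝ) (φ φl : ℝ → ℝ → ℝ → Matrix (Fin 2) (Fin 2) ℂ) (l : ℝ)
    (hκsm : ContDiff ℝ (⊤ : ℕ∞) (fun p : ℝ × ℝ => κ p.1 p.2))
    (hκpos : ∀ x t, 0 < κ x t)
    (hmkdv : ∀ x t, deriv (fun s => κ x s) t =
      (3 / 2) * (κ x t) ^ 2 * deriv (fun y => κ y t) x + iteratedDeriv 3 (fun y => κ y t) x)
    (hsu : ∀ x t l', (φ x t l')ᴴ * φ x t l' = 1 ∧ (φ x t l').det = 1)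
    (hφsm : ∀ i j, ContDiff ℝ (⊤ : ℕ∞) (fun p : ℝ × ℝ × ℝ => φ p.1 p.2.1 p.2.2 i j))
    (hx : ∀ x t l', ∀ i j, HasDerivAt (fun y => φ y t l' i j)
      ((φ x t l' * Lmat (κ x t) l') i j) x)
    (ht : ∀ x t l', ∀ i j, HasDerivAt (fun s => φ x s l' i j)
      ((φ x t l' * Mmat (κ x t) (deriv (fun y => κ y t) x)
        (iteratedDeriv 2 (fun y => κ y t) x) l') i j) t)
    (hl : ∀ x t l', ∀ i j, HasDerivAt (fun u => φ x t u i j) (φl x t l' i j) l')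
    (S : ℝ → ℝ → Matrix (Fin 2) (Fin 2) ℂ)
    (hS : ∀ x t, S x t = φl x t l * (φ x t l)⁻¹)
    (γ : ℝ → ℝ → Fin 3 → ℝ)
    (hγ : ∀ x t, γ x t = ![2 * (S x t 0 0).im, 2 * (S x t 1 0).im, 2 * (S x t 1 0).re]) :
    (∀ x t, (S x t).trace = 0 ∧ (S x t)ᴴ = -(S x t)) ∧
    (∀ x t, fmap (γ x t) = S x t) ∧
    (∀ x t, dot3 (Dx γ x t) (Dx γ x t) = 1) ∧
    (∀ x t, curv γ x t = κ x t) ∧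
    (∀ x t, tors γ x t = l) := by
  -- ===== basic facts about φ =====
  have hdet : ∀ x t l', (φ x t l').det = 1 := fun x t l' => (hsu x t l').2
  have hinv : ∀ x t l', (φ x t l')⁻¹ = (φ x t l').adjugate := by
    intro x t l'
    rw [Matrix.inv_def, hdet x t l']
    simp
  have hadjH : ∀ x t l', (φ x t l')ᴴ = (φ x t l').adjugate := by
    intro x t l'
    have h1 : (φ x t l')ᴴ * φ x t l' = 1 := (hsu x t l').1
    have h2 : φ x t l' * (φ x t l').adjugate = 1 := by
      rw [Matrix.mul_adjugate, hdet x t l', one_smul]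
    calc (φ x t l')ᴴ = (φ x t l')ᴴ * (φ x t l' * (φ x t l').adjugate) := by rw [h2, mul_one]
    _ = ((φ x t l')ᴴ * φ x t l') * (φ x t l').adjugate := by rw [mul_assoc]
    _ = (φ x t l').adjugate := by rw [h1, one_mul]
  have rc00 : ∀ x t l', (starRingEnd ℂ) (φ x t l' 0 0) = φ x t l' 1 1 := by
    intro x t l'
    have := congrFun (congrFun (hadjH x t l') 0) 0
    simpa [Matrix.conjTranspose_apply, Matrix.adjugate_fin_two, Complex.star_def] using this
  have rc10 : ∀ x t l', (starRingEnd ℂ) (φ x t l' 1 0) = -φ x t l' 0 1 := by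
    intro x t l'
    have := congrFun (congrFun (hadjH x t l') 0) 1
    simpa [Matrix.conjTranspose_apply, Matrix.adjugate_fin_two, Complex.star_def] using this
  have rc11 : ∀ x t l', (starRingEnd ℂ) (φ x t l' 1 1) = φ x t l' 0 0 := by
    intro x t l'
    have := congrFun (congrFun (hadjH x t l') 1) 1
    simpa [Matrix.conjTranspose_apply, Matrix.adjugate_fin_two, Complex.star_def] using this
  have rc01 : ∀ x t l', (starRingEnd ℂ) (φ x t l' 0 1) = -φ x t l' 1 0 := by
    intro x t l'
    have := congrFun (congrFun (hadjH x t l') 1) 0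
    simpa [Matrix.conjTranspose_apply, Matrix.adjugate_fin_two, Complex.star_def] using this
  have hnorm : ∀ x t l', φ x t l' 0 0 * (starRingEnd ℂ) (φ x t l' 0 0)
      + φ x t l' 1 0 * (starRingEnd ℂ) (φ x t l' 1 0) = 1 := by
    intro x t l'
    have hd := hdet x t l'
    rw [Matrix.det_fin_two] at hd
    rw [rc00 x t l', rc10 x t l']
    linear_combination hd
  have hUeq : ∀ x t l', φ x t l' = U (φ x t l' 0 0) (φ x t l' 1 0) := by
    intro x t l'
    ext i j
    fin_cases i <;> fin_cases j <;> simp [U]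
    · rw [rc10 x t l']; ring
    · rw [← rc00 x t l']
  -- ===== derivative of L with respect to λ =====
  have hI : HasDerivAt (fun u : ℝ => (u : ℂ)) 1 l := by
    simpa using (hasDerivAt_id l).ofReal_comp
  have hLd : ∀ (k : ℝ) (i j : Fin 2), HasDerivAt (fun u : ℝ => Lmat k u i j) (E1m i j) l := by
    intro k i j
    fin_cases i <;> fin_cases j
    · have h : HasDerivAt (fun u : ℝ => (Complex.I / 2) * (u:ℂ)) (Complex.I/2) l := by
        simpa using hI.const_mul (Complex.I/2)
      have h2 := h.congr_of_eventuallyEq (f₁ := fun u : ℝ => Lmat k u 0 0)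
        (by filter_upwards with u; simp [Lmat]; ring)
      simpa [E1m] using h2
    · have h2 := (hasDerivAt_const l (-(k:ℂ)/2)).congr_of_eventuallyEq
        (f₁ := fun u : ℝ => Lmat k u 0 1) (by filter_upwards with u; simp [Lmat]; ring)
      simpa [E1m] using h2
    · have h2 := (hasDerivAt_const l ((k:ℂ)/2)).congr_of_eventuallyEq
        (f₁ := fun u : ℝ => Lmat k u 1 0) (by filter_upwards with u; simp [Lmat]; ring)
      simpa [E1m] using h2
    · have h : HasDerivAt (fun u : ℝ => (-(Complex.I) / 2) * (u:ℂ)) (-(Complex.I)/2) l := by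
        simpa using hI.const_mul (-(Complex.I)/2)
      have h2 := h.congr_of_eventuallyEq (f₁ := fun u : ℝ => Lmat k u 1 1)
        (by filter_upwards with u; simp [Lmat]; ring)
      simpa [E1m, neg_div] using h2
  -- ===== x-derivative of φl (Clairaut) =====
  have hφlx : ∀ x t (i j : Fin 2), HasDerivAt (fun y => φl y t l i j)
      ((φl x t l * Lmat (κ x t) l + φ x t l * E1m) i j) x := by
    intro x t i j
    have hg : ContDiff ℝ (⊤ : ℕ∞) (fun p : ℝ × ℝ => φ p.1 t p.2 i j) :=
      (hφsm i j).comp (f := fun p : ℝ × ℝ => (p.1, t, p.2)) (ContDiff.prodMk contDiff_fst (ContDiff.prodMk contDiff_const contDiff_snd))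
    have hd : HasDerivAt (fun u => (φ x t u * Lmat (κ x t) u) i j)
        ((φl x t l * Lmat (κ x t) l + φ x t l * E1m) i j) l := by
      have H := ((hl x t l i 0).mul (hLd (κ x t) 0 j)).add
        ((hl x t l i 1).mul (hLd (κ x t) 1 j))
      have heq : (fun u => (φ x t u * Lmat (κ x t) u) i j)
          = fun u => φ x t u i 0 * Lmat (κ x t) u 0 j + φ x t u i 1 * Lmat (κ x t) u 1 j := by
        funext u; simp [Matrix.mul_apply, Fin.sum_univ_two]
      rw [heq]
      convert H using 1
      · rfl
      · rfl
      simp [Matrix.mul_apply, Fin.sum_univ_two, Matrix.add_apply]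
      ring
    exact clairaut (p := (x, l)) hg (fun p => hx p.1 t p.2 i j) (fun p => hl p.1 t p.2 i j) hd
  -- ===== x-derivative of S =====
  have hSE : ∀ y t, S y t = φl y t l *
      !![φ y t l 1 1, -(φ y t l 0 1); -(φ y t l 1 0), φ y t l 0 0] := by
    intro y t
    rw [hS, hinv, Matrix.adjugate_fin_two]
  have hadjx : ∀ x t (i j : Fin 2), HasDerivAt
      (fun y => !![φ y t l 1 1, -(φ y t l 0 1); -(φ y t l 1 0), φ y t l 0 0] i j)
      (!![(φ x t l * Lmat (κ x t) l) 1 1, -((φ x t l * Lmat (κ x t) l) 0 1);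
          -((φ x t l * Lmat (κ x t) l) 1 0), (φ x t l * Lmat (κ x t) l) 0 0] i j) x := by
    intro x t i j
    fin_cases i <;> fin_cases j <;> simp only [Matrix.cons_val', Matrix.cons_val_zero,
      Matrix.cons_val_one, Matrix.head_cons, Matrix.empty_val', Matrix.cons_val_fin_one,
      Matrix.head_fin_const, Matrix.of_apply]
    exacts [hx x t l 1 1, (hx x t l 0 1).neg, (hx x t l 1 0).neg, hx x t l 0 0]
  have hSx : ∀ x t (i j : Fin 2), HasDerivAt (fun y => S y t i j)
      ((φ x t l * e1 * (φ x t l)ᴴ) i j) x := by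
    intro x t i j
    have H := entry_mul (hφlx x t) (hadjx x t) i j
    have heq : (fun y => S y t i j) = (fun y =>
        (φl y t l * !![φ y t l 1 1, -(φ y t l 0 1); -(φ y t l 1 0), φ y t l 0 0]) i j) := by
      funext y; rw [hSE]
    rw [heq]
    convert H using 1
    rw [hadjH x t l, Matrix.adjugate_fin_two]
    fin_cases i <;> fin_cases j <;>
      · simp [Matrix.mul_apply, Fin.sum_univ_two, Matrix.add_apply, Lmat, e1, E1m]
        ring
  -- ===== x-derivatives of φ eᵢ φᴴ =====
  have hconjx : ∀ x t (i j : Fin 2), HasDerivAt (fun y => ((φ y t l)ᴴ) i j)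
      (((φ x t l * Lmat (κ x t) l)ᴴ) i j) x := by
    intro x t i j
    have := (hx x t l j i).star
    simpa [Matrix.conjTranspose_apply] using this
  have hφe1x : ∀ x t (i j : Fin 2), HasDerivAt (fun y => (φ y t l * e1) i j)
      ((φ x t l * Lmat (κ x t) l * e1) i j) x := by
    intro x t i j
    have H := entry_mul (g := fun _ => e1) (g' := 0) (hx x t l)
      (fun i j => by simpa using hasDerivAt_const x (e1 i j)) i j
    simpa using H
  have hφe3x : ∀ x t (i j : Fin 2), HasDerivAt (fun y => (φ y t l * e3) i j)
      ((φ x t l * Lmat (κ x t) l * e3) i j) x := by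
    intro x t i j
    have H := entry_mul (g := fun _ => e3) (g' := 0) (hx x t l)
      (fun i j => by simpa using hasDerivAt_const x (e3 i j)) i j
    simpa using H
  have hTmx : ∀ x t (i j : Fin 2), HasDerivAt (fun y => (φ y t l * e1 * (φ y t l)ᴴ) i j)
      ((κ x t : ℂ) * ((φ x t l * e2 * (φ x t l)ᴴ) i j)) x := by
    intro x t i j
    have H := entry_mul (hφe1x x t) (hconjx x t) i j
    convert H using 1
    fin_cases i <;> fin_cases j <;>
      · simp [Matrix.mul_apply, Fin.sum_univ_two, Matrix.conjTranspose_apply, Matrix.add_apply,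
          Lmat, e1, e2, _root_.map_add, _root_.map_mul, _root_.map_neg, map_ofNat, _root_.map_one, Complex.conj_I, Complex.conj_ofReal, Complex.star_def]
        ring
  have hBmx : ∀ x t (i j : Fin 2), HasDerivAt (fun y => (φ y t l * e3 * (φ y t l)ᴴ) i j)
      ((-l : ℂ) * ((φ x t l * e2 * (φ x t l)ᴴ) i j)) x := by
    intro x t i j
    have H := entry_mul (hφe3x x t) (hconjx x t) i j
    convert H using 1
    fin_cases i <;> fin_cases j <;>
      · simp [Matrix.mul_apply, Fin.sum_univ_two, Matrix.conjTranspose_apply, Matrix.add_apply,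
          Lmat, e3, e2, _root_.map_add, _root_.map_mul, _root_.map_neg, map_ofNat, _root_.map_one, Complex.conj_I, Complex.conj_ofReal, Complex.star_def]
        ring
  -- ===== λ-derivative relations for φl =====
  have rl00 : ∀ x t, (starRingEnd ℂ) (φl x t l 0 0) = φl x t l 1 1 := by
    intro x t
    have B : HasDerivAt (fun u => φ x t u 1 1) (star (φl x t l 0 0)) l :=
      (hl x t l 0 0).star.congr_of_eventuallyEq
        (by filter_upwards with u; rw [← rc00 x t u]; rfl)
    exact B.unique (hl x t l 1 1)
  have rl10 : ∀ x t, (starRingEnd ℂ) (φl x t l 1 0) = -φl x t l 0 1 := by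
    intro x t
    have B : HasDerivAt (fun u => -φ x t u 0 1) (star (φl x t l 1 0)) l :=
      (hl x t l 1 0).star.congr_of_eventuallyEq
        (by filter_upwards with u; rw [← rc10 x t u]; rfl)
    exact B.unique (hl x t l 0 1).neg
  have rl11 : ∀ x t, (starRingEnd ℂ) (φl x t l 1 1) = φl x t l 0 0 := by
    intro x t; rw [← rl00 x t, Complex.conj_conj]
  have rl01 : ∀ x t, (starRingEnd ℂ) (φl x t l 0 1) = -φl x t l 1 0 := by
    intro x t
    have h := congrArg (starRingEnd ℂ) (rl10 x t)
    simp only [Complex.conj_conj, map_neg] at h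
    rw [h]; ring
  have hdet' : ∀ x t, φl x t l 0 0 * φ x t l 1 1 + φ x t l 0 0 * φl x t l 1 1
      - (φl x t l 0 1 * φ x t l 1 0 + φ x t l 0 1 * φl x t l 1 0) = 0 := by
    intro x t
    have A := ((hl x t l 0 0).mul (hl x t l 1 1)).sub ((hl x t l 0 1).mul (hl x t l 1 0))
    have heq : (fun u => φ x t u 0 0 * φ x t u 1 1 - φ x t u 0 1 * φ x t u 1 0)
        = (fun _ : ℝ => (1 : ℂ)) := by
      funext u
      rw [← Matrix.det_fin_two, hdet x t u]
    rw [show (((fun u => φ x t u 0 0) * fun u => φ x t u 1 1) - (fun u => φ x t u 0 1) * fun u => φ x t u 1 0) = (fun u => φ x t u 0 0 * φ x t u 1 1 - φ x t u 0 1 * φ x t u 1 0) from rfl, heq] at A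
    exact A.unique (hasDerivAt_const l 1)
  -- ===== entries of S =====
  have hS00 : ∀ x t, S x t 0 0 = φl x t l 0 0 * φ x t l 1 1 - φl x t l 0 1 * φ x t l 1 0 := by
    intro x t; rw [hSE]; simp [Matrix.mul_apply, Fin.sum_univ_two]; try ring
  have hS01 : ∀ x t, S x t 0 1 = -(φl x t l 0 0 * φ x t l 0 1) + φl x t l 0 1 * φ x t l 0 0 := by
    intro x t; rw [hSE]; simp [Matrix.mul_apply, Fin.sum_univ_two]; try ring
  have hS10 : ∀ x t, S x t 1 0 = φl x t l 1 0 * φ x t l 1 1 - φl x t l 1 1 * φ x t l 1 0 := by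
    intro x t; rw [hSE]; simp [Matrix.mul_apply, Fin.sum_univ_two]; try ring
  have hS11 : ∀ x t, S x t 1 1 = -(φl x t l 1 0 * φ x t l 0 1) + φl x t l 1 1 * φ x t l 0 0 := by
    intro x t; rw [hSE]; simp [Matrix.mul_apply, Fin.sum_univ_two]; try ring
  -- ===== Part 1 : S is traceless and skew-hermitian =====
  have htr : ∀ x t, (S x t).trace = 0 := by
    intro x t
    rw [Matrix.trace_fin_two, hS00 x t, hS11 x t]
    linear_combination hdet' x t
  have hskew : ∀ x t, (S x t)ᴴ = -(S x t) := by
    intro x t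
    ext i j
    fin_cases i <;> fin_cases j <;>
      simp only [Matrix.conjTranspose_apply, Matrix.neg_apply, Complex.star_def,
        Fin.zero_eta, Fin.mk_one, Fin.isValue]
    · rw [hS00 x t, _root_.map_sub, _root_.map_mul, _root_.map_mul, rl00 x t, rc11 x t l, rl01 x t, rc10 x t l]
      linear_combination hdet' x t
    · rw [hS10 x t, _root_.map_sub, _root_.map_mul, _root_.map_mul, rl10 x t, rc11 x t l, rl11 x t, rc10 x t l,
        hS01 x t]
      ring
    · rw [hS01 x t, _root_.map_add, _root_.map_neg, _root_.map_mul, _root_.map_mul, rl00 x t, rc01 x t l, rl01 x t,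
        rc00 x t l, hS10 x t]
      ring
    · rw [hS11 x t, _root_.map_add, _root_.map_neg, _root_.map_mul, _root_.map_mul, rl10 x t, rc01 x t l, rl11 x t,
        rc00 x t l]
      linear_combination hdet' x t
  -- ===== Part 2 : fmap γ = S =====
  have hpart2 : ∀ x t, fmap (γ x t) = S x t := by
    intro x t
    have h00 := congrFun (congrFun (hskew x t) 0) 0
    have h01 := congrFun (congrFun (hskew x t) 0) 1
    simp only [Matrix.conjTranspose_apply, Matrix.neg_apply, Complex.star_def] at h00 h01
    have hre0 : (S x t 0 0).re = 0 := by
      have := congrArg Complex.re h00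
      simp at this
      linarith
    have h11 : S x t 1 1 = -S x t 0 0 := by
      have := htr x t
      rw [Matrix.trace_fin_two] at this
      linear_combination this
    have h01re : (S x t 0 1).re = -(S x t 1 0).re := by
      have := congrArg Complex.re h01
      simp at this
      linarith
    have h01im : (S x t 0 1).im = (S x t 1 0).im := by
      have := congrArg Complex.im h01
      simp at this
      linarith
    ext i j
    fin_cases i <;> fin_cases j <;>
      · simp [fmap, hγ, e1, e2, e3, Complex.ext_iff, Complex.mul_re, Complex.mul_im,
          Complex.div_re, Complex.div_im, Complex.normSq, h11]
        constructor <;> linarith [hre0, h01re, h01im]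
  -- ===== the tangent frame =====
  have hDxH : ∀ x t, HasDerivAt (fun x' => γ x' t) (fv (φ x t l * e1 * (φ x t l)ᴴ)) x := by
    intro x t
    have hγ0 : (fun x' => γ x' t) = fun x' =>
        ![2 * (S x' t 0 0).im, 2 * (S x' t 1 0).im, 2 * (S x' t 1 0).re] := by
      funext x'; rw [hγ]
    rw [hγ0, hasDerivAt_pi]
    intro i
    fin_cases i <;> simp [fv]
    · exact ((hSx x t 0 0).cim).const_mul 2
    · exact ((hSx x t 1 0).cim).const_mul 2
    · exact ((hSx x t 1 0).cre).const_mul 2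
  have hDx : ∀ x t, Dx γ x t = fv (φ x t l * e1 * (φ x t l)ᴴ) := by
    intro x t
    exact (hDxH x t).deriv
  have hDxxH : ∀ x t, HasDerivAt (fun x' => Dx γ x' t)
      (κ x t • fv (φ x t l * e2 * (φ x t l)ᴴ)) x := by
    intro x t
    have heq : (fun x' => Dx γ x' t) = fun x' => fv (φ x' t l * e1 * (φ x' t l)ᴴ) :=
      funext fun x' => hDx x' t
    rw [heq, hasDerivAt_pi]
    intro i
    fin_cases i <;> simp [fv]
    · have h := ((hTmx x t 0 0).cim).const_mul 2
      convert h using 1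
      · rfl
      simp [Complex.mul_im]
      ring
    · have h := ((hTmx x t 1 0).cim).const_mul 2
      convert h using 1
      · rfl
      simp [Complex.mul_im]
      ring
    · have h := ((hTmx x t 1 0).cre).const_mul 2
      convert h using 1
      · rfl
      simp [Complex.mul_re]
      ring
  have hDxx : ∀ x t, Dxx γ x t = κ x t • fv (φ x t l * e2 * (φ x t l)ᴴ) := by
    intro x t
    exact (hDxxH x t).deriv
  have hNN : ∀ x t, dot3 (fv (φ x t l * e2 * (φ x t l)ᴴ)) (fv (φ x t l * e2 * (φ x t l)ᴴ)) = 1 := by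
    intro x t
    rw [hUeq x t l]
    exact su2_NN _ _ (hnorm x t l)
  have hTT : ∀ x t, dot3 (fv (φ x t l * e1 * (φ x t l)ᴴ)) (fv (φ x t l * e1 * (φ x t l)ᴴ)) = 1 := by
    intro x t
    rw [hUeq x t l]
    exact su2_TT _ _ (hnorm x t l)
  have hcurv : ∀ x t, curv γ x t = κ x t := by
    intro x t
    show Real.sqrt (dot3 (Dxx γ x t) (Dxx γ x t)) = κ x t
    rw [hDxx x t]
    have hsc : dot3 (κ x t • fv (φ x t l * e2 * (φ x t l)ᴴ)) (κ x t • fv (φ x t l * e2 * (φ x t l)ᴴ))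
        = κ x t ^ 2 * dot3 (fv (φ x t l * e2 * (φ x t l)ᴴ)) (fv (φ x t l * e2 * (φ x t l)ᴴ)) := by
      simp [dot3, Pi.smul_apply, smul_eq_mul]
      ring
    rw [hsc, hNN x t, mul_one, Real.sqrt_sq (hκpos x t).le]
  have hNv : ∀ x t, Nv γ x t = fv (φ x t l * e2 * (φ x t l)ᴴ) := by
    intro x t
    show (curv γ x t)⁻¹ • Dxx γ x t = _
    rw [hcurv x t, hDxx x t, smul_smul, inv_mul_cancel₀ (hκpos x t).ne', one_smul]
  have hBv : ∀ x t, Bv γ x t = fv (φ x t l * e3 * (φ x t l)ᴴ) := by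
    intro x t
    show cross3 (Dx γ x t) (Nv γ x t) = _
    rw [hDx x t, hNv x t, hUeq x t l]
    exact su2_cross _ _ (hnorm x t l)
  have hBxH : ∀ x t, HasDerivAt (fun x' => Bv γ x' t)
      ((-l) • fv (φ x t l * e2 * (φ x t l)ᴴ)) x := by
    intro x t
    have heq : (fun x' => Bv γ x' t) = fun x' => fv (φ x' t l * e3 * (φ x' t l)ᴴ) :=
      funext fun x' => hBv x' t
    rw [heq, hasDerivAt_pi]
    intro i
    fin_cases i <;> simp [fv]
    · have h := ((hBmx x t 0 0).cim).const_mul 2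
      convert h using 1
      · rfl
      simp [Complex.mul_im]
      ring
    · have h := ((hBmx x t 1 0).cim).const_mul 2
      convert h using 1
      · rfl
      simp [Complex.mul_im]
      ring
    · have h := ((hBmx x t 1 0).cre).const_mul 2
      convert h using 1
      · rfl
      simp [Complex.mul_re]
      ring
  have htors : ∀ x t, tors γ x t = l := by
    intro x t
    show -dot3 (Nv γ x t) (deriv (fun x' => Bv γ x' t) x) = l
    rw [(hBxH x t).deriv, hNv x t]
    have h := hNN x t
    simp only [dot3, Pi.smul_apply, smul_eq_mul] at h ⊢
    linear_combination l * h
  refine ⟨fun x t => ⟨htr x t, hskew x t⟩, hpart2, fun x t => ?_, hcurv, htors⟩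
  rw [hDx x t]
  exact hTT x t
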